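/- Let (X,d) be a metric space, Σ ⊆ X closed, and ρ : X \ Σ → (0,∞) a continuous density with ρ(x) ≥ 1/dist(x,Σ). If x_n ∈ X \ Σ is a sequence Cauchy with respect to the path metric d_ρ(x,y) := inf_γ ∫_γ ρ ds (infimum over rectifiable arcs in X \ Σ), then d_ρ(x_n, x_m) ≥ (1/2)·log((1 + d(x_n,x_m)/dist(x_n,Σ))·(1 + d(x_n,x_m)/dist(x_m,Σ))); in particular, if (x_n) stays in a region where dist(·,Σ) ≤ D and (x_n) is d_ρ-Cauchy then (x_n) is d-Cauchy. -/
import Mathlib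

open Real intervalIntegral

private lemma curve_integral_bound {X : Type*} [MetricSpace X]
    (S : Set X) (hS : IsClosed S) (hSne : S.Nonempty)
    (ρ : X → ℝ) (hρc : ContinuousOn ρ Sᶜ)
    (hρ : ∀ x ∉ S, 1 / Metric.infDist x S ≤ ρ x)
    (a b : X) (ha : a ∉ S) (hb : b ∉ S)
    (γ : ℝ → X) (L : ℝ) (hL : 0 ≤ L) (h0 : γ 0 = a) (hLb : γ L = b)
    (hγS : ∀ t ∈ Set.Icc (0:ℝ) L, γ t ∉ S)
    (hlip : ∀ s ∈ Set.Icc (0:ℝ) L, ∀ t ∈ Set.Icc (0:ℝ) L, dist (γ s) (γ t) ≤ |s - t|) :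
    (1/2) * Real.log ((1 + dist a b / Metric.infDist a S) *
        (1 + dist a b / Metric.infDist b S)) ≤ ∫ t in (0:ℝ)..L, ρ (γ t) := by
  set da := Metric.infDist a S with hda
  set db := Metric.infDist b S with hdb
  have hda0 : 0 < da := (hS.notMem_iff_infDist_pos hSne).1 ha
  have hdb0 : 0 < db := (hS.notMem_iff_infDist_pos hSne).1 hb
  -- distance bound: dist a b ≤ L
  have hdab : dist a b ≤ L := by
    have := hlip 0 ⟨le_refl _, hL⟩ L ⟨hL, le_refl _⟩
    rw [h0, hLb] at this
    calc dist a b ≤ |0 - L| := this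
      _ = L := by rw [abs_sub_comm, sub_zero, abs_of_nonneg hL]
  -- pointwise bound
  have hpt : ∀ t ∈ Set.Icc (0:ℝ) L,
      (1/2) * ((da + t)⁻¹ + (db + (L - t))⁻¹) ≤ ρ (γ t) := by
    intro t ht
    have h1 : Metric.infDist (γ t) S ≤ da + t := by
      have := Metric.infDist_le_infDist_add_dist (x := γ t) (y := a) (s := S)
      have hd : dist (γ t) a ≤ t := by
        have := hlip t ht 0 ⟨le_refl _, hL⟩
        rw [h0, sub_zero, abs_of_nonneg ht.1] at this
        exact this
      linarith [this]
    have h2 : Metric.infDist (γ t) S ≤ db + (L - t) := by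
      have := Metric.infDist_le_infDist_add_dist (x := γ t) (y := b) (s := S)
      have hd : dist (γ t) b ≤ L - t := by
        have h := hlip t ht L ⟨hL, le_refl _⟩
        rw [hLb, abs_of_nonpos (by linarith [ht.2])] at h
        linarith
      linarith [this]
    have hpos : 0 < Metric.infDist (γ t) S :=
      (hS.notMem_iff_infDist_pos hSne).1 (hγS t ht)
    have hρt : 1 / Metric.infDist (γ t) S ≤ ρ (γ t) := hρ _ (hγS t ht)
    have e1 : (da + t)⁻¹ ≤ (Metric.infDist (γ t) S)⁻¹ :=
      inv_anti₀ hpos h1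
    have e2 : (db + (L - t))⁻¹ ≤ (Metric.infDist (γ t) S)⁻¹ :=
      inv_anti₀ hpos h2
    rw [one_div] at hρt
    linarith
  -- integrability
  have hγcont : ContinuousOn γ (Set.Icc 0 L) := by
    intro t ht
    apply Metric.continuousWithinAt_iff.2
    intro ε hε
    exact ⟨ε, hε, fun {s} hs hst => lt_of_le_of_lt (hlip s hs t ht) hst⟩
  have hint1 : IntervalIntegrable (fun t => ρ (γ t)) MeasureTheory.volume 0 L := by
    apply ContinuousOn.intervalIntegrable
    rw [Set.uIcc_of_le hL]
    exact hρc.comp hγcont (fun t ht => hγS t ht)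
  have hint2 : IntervalIntegrable (fun t => (1/2) * ((da + t)⁻¹ + (db + (L - t))⁻¹))
      MeasureTheory.volume 0 L := by
    apply ContinuousOn.intervalIntegrable
    apply ContinuousOn.mul continuousOn_const
    apply ContinuousOn.add
    · exact ContinuousOn.inv₀ (by fun_prop) (fun t ht => by
        rw [Set.uIcc_of_le hL] at ht
        exact ne_of_gt (by have := ht.1; linarith))
    · exact ContinuousOn.inv₀ (by fun_prop) (fun t ht => by
        rw [Set.uIcc_of_le hL] at ht
        have : t ≤ L := ht.2
        nlinarith [ht.1])
  -- integral comparison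
  have hmono : (∫ t in (0:ℝ)..L, (1/2) * ((da + t)⁻¹ + (db + (L - t))⁻¹))
      ≤ ∫ t in (0:ℝ)..L, ρ (γ t) :=
    intervalIntegral.integral_mono_on hL hint2 hint1 hpt
  -- compute the model integral
  have hI1 : (∫ t in (0:ℝ)..L, (da + t)⁻¹) = Real.log (1 + L / da) := by
    have : (∫ t in (0:ℝ)..L, (da + t)⁻¹) = ∫ t in (0:ℝ)..L, (fun u : ℝ => u⁻¹) (t + da) := by
      congr 1; ext t; rw [add_comm]
    rw [this, intervalIntegral.integral_comp_add_right (fun u : ℝ => u⁻¹) da, zero_add,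
      integral_inv_of_pos hda0 (by linarith)]
    congr 1; field_simp; ring
  have hI2 : (∫ t in (0:ℝ)..L, (db + (L - t))⁻¹) = Real.log (1 + L / db) := by
    have : (∫ t in (0:ℝ)..L, (db + (L - t))⁻¹)
        = ∫ t in (0:ℝ)..L, (fun u : ℝ => u⁻¹) ((db + L) - t) := by
      congr 1; ext t; ring_nf
    rw [this, intervalIntegral.integral_comp_sub_left (fun u : ℝ => u⁻¹) (db + L)]
    have h1 : db + L - L = db := by ring
    have h2 : db + L - 0 = db + L := by ring
    rw [h1, h2, integral_inv_of_pos hdb0 (by linarith)]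
    congr 1; field_simp
  have hcomp : (∫ t in (0:ℝ)..L, (1/2) * ((da + t)⁻¹ + (db + (L - t))⁻¹))
      = (1/2) * (Real.log (1 + L / da) + Real.log (1 + L / db)) := by
    rw [intervalIntegral.integral_const_mul, intervalIntegral.integral_add, hI1, hI2]
    · exact ContinuousOn.intervalIntegrable (ContinuousOn.inv₀ (by fun_prop)
        (fun t ht => by rw [Set.uIcc_of_le hL] at ht
                        exact ne_of_gt (by have := ht.1; linarith)))
    · exact ContinuousOn.intervalIntegrable (ContinuousOn.inv₀ (by fun_prop)
        (fun t ht => by rw [Set.uIcc_of_le hL] at ht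
                        have : t ≤ L := ht.2; nlinarith [ht.1]))
  -- assemble
  have hlogle : Real.log ((1 + dist a b / da) * (1 + dist a b / db))
      ≤ Real.log (1 + L / da) + Real.log (1 + L / db) := by
    rw [← Real.log_mul (by positivity) (by positivity)]
    apply Real.log_le_log (by positivity)
    have hd0 : 0 ≤ dist a b := dist_nonneg
    apply mul_le_mul
    · have : dist a b / da ≤ L / da := by
        gcongr
      linarith
    · have : dist a b / db ≤ L / db := by
        gcongr
      linarith
    · positivity
    · positivity
  calc (1/2) * Real.log ((1 + dist a b / da) * (1 + dist a b / db))
      ≤ (1/2) * (Real.log (1 + L / da) + Real.log (1 + L / db)) := by linarith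
    _ = ∫ t in (0:ℝ)..L, (1/2) * ((da + t)⁻¹ + (db + (L - t))⁻¹) := hcomp.symm
    _ ≤ ∫ t in (0:ℝ)..L, ρ (γ t) := hmono

theorem path_metric_cauchy {X : Type*} [MetricSpace X]
    (S : Set X) (hS : IsClosed S) (hSne : S.Nonempty)
    (ρ : X → ℝ) (hρc : ContinuousOn ρ Sᶜ) (hρpos : ∀ x ∉ S, 0 < ρ x)
    (hρ : ∀ x ∉ S, 1 / Metric.infDist x S ≤ ρ x)
    (dρ : X → X → ℝ)
    (hconn : ∀ x ∉ S, ∀ y ∉ S,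
      {I : ℝ | ∃ (γ : ℝ → X) (L : ℝ), 0 ≤ L ∧ γ 0 = x ∧ γ L = y ∧
        (∀ t ∈ Set.Icc (0:ℝ) L, γ t ∉ S) ∧
        (∀ s ∈ Set.Icc (0:ℝ) L, ∀ t ∈ Set.Icc (0:ℝ) L, dist (γ s) (γ t) ≤ |s - t|) ∧
        I = ∫ t in (0:ℝ)..L, ρ (γ t)}.Nonempty)
    (hdρ : ∀ x ∉ S, ∀ y ∉ S, dρ x y =
      sInf {I : ℝ | ∃ (γ : ℝ → X) (L : ℝ), 0 ≤ L ∧ γ 0 = x ∧ γ L = y ∧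
        (∀ t ∈ Set.Icc (0:ℝ) L, γ t ∉ S) ∧
        (∀ s ∈ Set.Icc (0:ℝ) L, ∀ t ∈ Set.Icc (0:ℝ) L, dist (γ s) (γ t) ≤ |s - t|) ∧
        I = ∫ t in (0:ℝ)..L, ρ (γ t)})
    (x : ℕ → X) (hx : ∀ n, x n ∉ S)
    (hCauchy : ∀ ε > (0:ℝ), ∃ N, ∀ m ≥ N, ∀ n ≥ N, dρ (x m) (x n) < ε) :
    (∀ n m : ℕ,
      (1/2) * Real.log ((1 + dist (x n) (x m) / Metric.infDist (x n) S) *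
        (1 + dist (x n) (x m) / Metric.infDist (x m) S)) ≤ dρ (x n) (x m)) ∧
    ((∃ D : ℝ, ∀ n, Metric.infDist (x n) S ≤ D) → CauchySeq x) := by
  have key : ∀ a ∉ S, ∀ b ∉ S,
      (1/2) * Real.log ((1 + dist a b / Metric.infDist a S) *
        (1 + dist a b / Metric.infDist b S)) ≤ dρ a b := by
    intro a ha b hb
    rw [hdρ a ha b hb]
    apply le_csInf (hconn a ha b hb)
    rintro I ⟨γ, L, hL, h0, hLb, hγS, hlip, rfl⟩
    exact curve_integral_bound S hS hSne ρ hρc hρ a b ha hb γ L hL h0 hLb hγS hlip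
  refine ⟨fun n m => key _ (hx n) _ (hx m), ?_⟩
  rintro ⟨D, hD⟩
  have hdpos : ∀ n, 0 < Metric.infDist (x n) S :=
    fun n => (hS.notMem_iff_infDist_pos hSne).1 (hx n)
  have hD0 : 0 < D := lt_of_lt_of_le (hdpos 0) (hD 0)
  rw [Metric.cauchySeq_iff]
  intro ε hε
  have hε' : (0:ℝ) < (1/2) * Real.log (1 + ε / D) := by
    have : (1:ℝ) < 1 + ε / D := by
      have : 0 < ε / D := by positivity
      linarith
    have := Real.log_pos this
    linarith
  obtain ⟨N, hN⟩ := hCauchy _ hε'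
  refine ⟨N, fun m hm n hn => ?_⟩
  have hlt := hN m hm n hn
  have hkey := key _ (hx m) _ (hx n)
  set dm := Metric.infDist (x m) S
  set dn := Metric.infDist (x n) S
  have hdm : 0 < dm := hdpos m
  have hdn : 0 < dn := hdpos n
  have hd0 : 0 ≤ dist (x m) (x n) := dist_nonneg
  have hfac2 : (1:ℝ) ≤ 1 + dist (x m) (x n) / dn := by
    have : 0 ≤ dist (x m) (x n) / dn := by positivity
    linarith
  have hfac1pos : (0:ℝ) < 1 + dist (x m) (x n) / dm := by positivity
  have hmono : Real.log (1 + dist (x m) (x n) / dm)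
      ≤ Real.log ((1 + dist (x m) (x n) / dm) * (1 + dist (x m) (x n) / dn)) := by
    apply Real.log_le_log hfac1pos
    nlinarith
  have hstep : Real.log (1 + dist (x m) (x n) / dm) < Real.log (1 + ε / D) := by
    have h1 : (1/2) * Real.log (1 + dist (x m) (x n) / dm) < (1/2) * Real.log (1 + ε / D) := by
      calc (1/2) * Real.log (1 + dist (x m) (x n) / dm)
          ≤ (1/2) * Real.log ((1 + dist (x m) (x n) / dm) * (1 + dist (x m) (x n) / dn)) := by
            linarith
        _ ≤ dρ (x m) (x n) := hkey
        _ < (1/2) * Real.log (1 + ε / D) := hlt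
    linarith
  have hexp : 1 + dist (x m) (x n) / dm < 1 + ε / D := by
    have := (Real.log_lt_log_iff hfac1pos (by positivity)).1 hstep
    exact this
  have : dist (x m) (x n) / dm < ε / D := by linarith
  have h2 : dist (x m) (x n) < ε / D * dm := by
    rw [div_lt_iff₀ hdm] at this; linarith
  calc dist (x m) (x n) < ε / D * dm := h2
    _ ≤ ε / D * D := by
        apply mul_le_mul_of_nonneg_left (hD m) (by positivity)
    _ = ε := by field_simp
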